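/- For integers n ≥ 0 and k ∈ ℤ, define Z_{n,k} : ℂ → ℂ by Z_{n,k}(z) = ((-1)^n/(2π))·∫₀^{2π} e^{i(n-2k)θ}·W_n(Im(e^{iθ}·conj(z))) dθ. Then Z_{n,k} is real-differentiable, and writing ∂_z = (1/2)(∂_x - i∂_y) and ∂_{z̄} = (1/2)(∂_x + i∂_y) for the Wirtinger derivatives with respect to z = x+iy: (i) ∂_{z̄} Z_{n,0} = 0 identically; (ii) ∂_z Z_{n,k} + ∂_{z̄} Z_{n,k+1} = 0 identically for every 0 ≤ k ≤ n-1; (iii) ∂_z Z_{n,n} = 0 identically. -/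

import Mathlib

/-!
Put `L_θ z = Im (e^{iθ} z̄)`; it is ℝ-linear in `z` and `2i L_θ z = e^{iθ} z̄ - e^{-iθ} z`.
Then `Z_{n,k}(z) = c_n ∫₀^{2π} e^{imθ} p(L_θ z) dθ` with `m = n - 2k` and `p = iⁿ U_n`, a polynomial
of degree `n`. Differentiating under the integral sign, `∂_z̄` and `∂_z` of such an integral are
`∓ i/2` times the integral with `p'` in place of `p` and frequency `m ± 1` in place of `m`.
So the two terms of (ii) carry the same frequency `n - 2k - 1` and cancel, while (i) and (iii)
reduce to `∫₀^{2π} e^{±i(n+1)θ} p'(L_θ z) dθ = 0`: `(L_θ z)^j` only contains the frequencies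
`-j, …, j`, and `deg p' < n + 1`.
-/

open Real Complex intervalIntegral

/-- The polynomials `W_n(t) = iⁿ U_n(t)` (`U_n` the Chebyshev polynomials of the second kind):
`W₀(t) = 1`, `W₁(t) = 2it`, `W_{n+2}(t) = 2it W_{n+1}(t) + W_n(t)`. -/
noncomputable def W : ℕ → ℂ → ℂ
  | 0, _ => 1
  | 1, t => 2 * Complex.I * t
  | (n + 2), t => 2 * Complex.I * t * W (n + 1) t + W n t

/-- The Zernike functions
`Z_{n,k}(z) = ((-1)^n/(2π)) ∫₀^{2π} e^{i(n-2k)θ} W_n(Im(e^{iθ} conj z)) dθ`. -/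
noncomputable def Znk (n : ℕ) (k : ℤ) (z : ℂ) : ℂ :=
  ((-1 : ℂ) ^ n / (2 * π)) *
    ∫ θ in (0 : ℝ)..(2 * π),
      Complex.exp (Complex.I * ((n : ℂ) - 2 * k) * θ) *
        W n (((Complex.exp (Complex.I * θ) * (starRingEnd ℂ) z).im : ℝ) : ℂ)

/-- The Wirtinger derivative `∂_z f = (1/2)(∂_x f - i ∂_y f)` of `f : ℂ → ℂ`, taken in the sense
of the real Fréchet derivative. -/
noncomputable def wirtingerZ (f : ℂ → ℂ) (z : ℂ) : ℂ :=
  (1 / 2) * (fderiv ℝ f z 1 - Complex.I * fderiv ℝ f z Complex.I)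

/-- The Wirtinger derivative `∂_z̄ f = (1/2)(∂_x f + i ∂_y f)` of `f : ℂ → ℂ`, taken in the sense
of the real Fréchet derivative. -/
noncomputable def wirtingerZbar (f : ℂ → ℂ) (z : ℂ) : ℂ :=
  (1 / 2) * (fderiv ℝ f z 1 + Complex.I * fderiv ℝ f z Complex.I)

open MeasureTheory Metric Polynomial Polynomial.Chebyshev

theorem hasFDerivAt_intervalIntegral_mul_comp {H : Type*} [NormedAddCommGroup H]
    [NormedSpace ℝ H] [ProperSpace H] {f f' : ℂ → ℂ} (hf : ∀ t, HasDerivAt f (f' t) t)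
    (hf' : Continuous f') {g : ℝ → ℂ} (hg : Continuous g) {L : ℝ → H →L[ℝ] ℂ} (hL : Continuous L)
    (a b : ℝ) (z₀ : H) :
    HasFDerivAt (fun z => ∫ θ in a..b, g θ * f (L θ z))
      (∫ θ in a..b, (g θ * f' (L θ z₀)) • L θ) z₀ := by
  have hfc : Continuous f := continuous_iff_continuousAt.2 fun t => (hf t).continuousAt
  have hF' : Continuous fun p : H × ℝ => (g p.2 * f' (L p.2 p.1)) • L p.2 := by fun_prop
  obtain ⟨C, hC⟩ := ((isCompact_closedBall z₀ 1).prod isCompact_uIcc).exists_bound_of_continuousOn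
    (hF'.continuousOn (s := closedBall z₀ 1 ×ˢ Set.uIcc a b))
  refine hasFDerivAt_integral_of_dominated_of_fderiv_le (F := fun z θ => g θ * f (L θ z))
    (F' := fun z θ => (g θ * f' (L θ z)) • L θ) (bound := fun _ => C)
    (ball_mem_nhds z₀ one_pos) (.of_forall fun z => ?_) ?_ ?_ ?_ intervalIntegrable_const ?_
  · exact (by fun_prop : Continuous fun θ => g θ * f (L θ z)).aestronglyMeasurable
  · exact (by fun_prop : Continuous fun θ => g θ * f (L θ z₀)).intervalIntegrable _ _
  · exact (by fun_prop : Continuous fun θ => (g θ * f' (L θ z₀)) • L θ).aestronglyMeasurable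
  · refine .of_forall fun θ hθ z hz => hC (z, θ) ⟨ball_subset_closedBall hz, ?_⟩
    exact Set.uIoc_subset_uIcc hθ
  · refine .of_forall fun θ _ z _ => ?_
    have := (((hf (L θ z)).hasFDerivAt.restrictScalars ℝ).comp z (L θ).hasFDerivAt).const_mul (g θ)
    refine this.congr_fderiv ?_
    ext v
    simp only [smul_apply, ContinuousLinearMap.comp_apply, ContinuousLinearMap.coe_restrictScalars',
      ContinuousLinearMap.toSpanSingleton_apply, smul_eq_mul]
    ring

theorem wirtingerZ_const_mul (c : ℂ) {f : ℂ → ℂ} {z : ℂ} (hf : DifferentiableAt ℝ f z) :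
    wirtingerZ (fun w => c * f w) z = c * wirtingerZ f z := by
  simp only [wirtingerZ, fderiv_const_mul hf, smul_apply, smul_eq_mul]
  ring

theorem wirtingerZbar_const_mul (c : ℂ) {f : ℂ → ℂ} {z : ℂ} (hf : DifferentiableAt ℝ f z) :
    wirtingerZbar (fun w => c * f w) z = c * wirtingerZbar f z := by
  simp only [wirtingerZbar, fderiv_const_mul hf, smul_apply, smul_eq_mul]
  ring

theorem integral_exp_int_mul_I {m : ℤ} (hm : m ≠ 0) :
    ∫ θ in (0 : ℝ)..(2 * π), exp (I * m * θ) = 0 := by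
  have hc : I * m ≠ 0 := by simp [hm]
  rw [integral_exp_mul_complex hc,
    show I * m * ((2 * π : ℝ) : ℂ) = m * (2 * π * I) by push_cast; ring, exp_int_mul_two_pi_mul_I]
  simp

theorem exp_int_add_one_mul_I (m : ℤ) (θ : ℝ) :
    exp (I * ((m + 1 : ℤ) : ℂ) * θ) = exp (I * m * θ) * exp (I * θ) := by
  rw [← Complex.exp_add]; push_cast; ring_nf

theorem exp_int_sub_one_mul_I (m : ℤ) (θ : ℝ) :
    exp (I * ((m - 1 : ℤ) : ℂ) * θ) = exp (I * m * θ) * exp (-(I * θ)) := by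
  rw [← Complex.exp_add]; push_cast; ring_nf

theorem W_eq_eval_U : ∀ (n : ℕ) (t : ℂ), W n t = I ^ n * (U ℂ n).eval t
  | 0, t => by simp [W]
  | 1, t => by simp only [W, pow_one, Nat.cast_one, U_one, eval_mul, eval_ofNat, eval_X]; ring
  | n + 2, t => by
    rw [W, W_eq_eval_U (n + 1), W_eq_eval_U n, show ((n + 2 : ℕ) : ℤ) = n + 2 by push_cast; rfl,
      U_add_two]
    push_cast
    simp only [eval_sub, eval_mul, eval_X, eval_ofNat]
    linear_combination (I ^ n * eval t (U ℂ n)) * I_sq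

-- `Im (e^{iθ} z̄)` (see `zernikeArg_apply`), in coordinates so that continuity in `θ` is evident.
noncomputable def zernikeArg (θ : ℝ) : ℂ →L[ℝ] ℂ :=
  Real.sin θ • (ofRealCLM.comp reCLM) - Real.cos θ • (ofRealCLM.comp imCLM)

@[fun_prop]
theorem continuous_zernikeArg : Continuous zernikeArg := by
  unfold zernikeArg; fun_prop

theorem zernikeArg_apply (θ : ℝ) (z : ℂ) :
    zernikeArg θ z = ((exp (I * θ) * (starRingEnd ℂ) z).im : ℂ) := by
  simp only [zernikeArg, sub_apply, smul_apply,
    ContinuousLinearMap.comp_apply, reCLM_apply, imCLM_apply, ofRealCLM_apply, real_smul]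
  rw [mul_comm I, mul_im, exp_ofReal_mul_I_re, exp_ofReal_mul_I_im, conj_re, conj_im]
  push_cast
  ring

theorem two_I_mul_zernikeArg (θ : ℝ) (z : ℂ) :
    2 * I * zernikeArg θ z = exp (I * θ) * (starRingEnd ℂ) z - exp (-(I * θ)) * z := by
  have h : (starRingEnd ℂ) (exp (I * θ) * (starRingEnd ℂ) z) = exp (-(I * θ)) * z := by
    simp [← exp_conj]
  rw [zernikeArg_apply, ← h, sub_conj]
  push_cast
  ring

theorem zernikeArg_one_add_I_mul (θ : ℝ) :
    zernikeArg θ 1 + I * zernikeArg θ I = -I * exp (I * θ) := by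
  have h1 := two_I_mul_zernikeArg θ 1
  have hI := two_I_mul_zernikeArg θ I
  simp only [(starRingEnd ℂ).map_one, mul_one] at h1
  rw [conj_I] at hI
  linear_combination (-I / 2) * h1 + hI / 2 + zernikeArg θ 1 * I_sq

theorem zernikeArg_one_sub_I_mul (θ : ℝ) :
    zernikeArg θ 1 - I * zernikeArg θ I = I * exp (-(I * θ)) := by
  have h1 := two_I_mul_zernikeArg θ 1
  have hI := two_I_mul_zernikeArg θ I
  simp only [(starRingEnd ℂ).map_one, mul_one] at h1
  rw [conj_I] at hI
  linear_combination (-I / 2) * h1 - hI / 2 + zernikeArg θ 1 * I_sq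

theorem integral_exp_mul_zernikeArg_pow (z : ℂ) :
    ∀ (j : ℕ) (m : ℤ), j < m.natAbs →
      ∫ θ in (0 : ℝ)..(2 * π), exp (I * m * θ) * zernikeArg θ z ^ j = 0
  | 0, m, hm => by simpa using integral_exp_int_mul_I (Int.natAbs_pos.mp hm)
  | j + 1, m, hm => by
    have step : ∀ θ : ℝ, exp (I * m * θ) * zernikeArg θ z ^ (j + 1) =
        -I / 2 * ((starRingEnd ℂ) z * (exp (I * ((m + 1 : ℤ) : ℂ) * θ) * zernikeArg θ z ^ j)
          - z * (exp (I * ((m - 1 : ℤ) : ℂ) * θ) * zernikeArg θ z ^ j)) := by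
      intro θ
      rw [exp_int_add_one_mul_I, exp_int_sub_one_mul_I]
      linear_combination (-I / 2 * exp (I * m * θ) * zernikeArg θ z ^ j) * two_I_mul_zernikeArg θ z
        + exp (I * m * θ) * zernikeArg θ z ^ (j + 1) * I_sq
    simp_rw [step]
    rw [intervalIntegral.integral_const_mul,
      intervalIntegral.integral_sub (Continuous.intervalIntegrable (by fun_prop) _ _)
        (Continuous.intervalIntegrable (by fun_prop) _ _),
      intervalIntegral.integral_const_mul, intervalIntegral.integral_const_mul,
      integral_exp_mul_zernikeArg_pow z j (m + 1) (by omega),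
      integral_exp_mul_zernikeArg_pow z j (m - 1) (by omega)]
    simp

noncomputable def zernikeIntegral (p : ℂ[X]) (m : ℤ) (z : ℂ) : ℂ :=
  ∫ θ in (0 : ℝ)..(2 * π), exp (I * m * θ) * p.eval (zernikeArg θ z)

theorem zernikeIntegral_eq_zero (p : ℂ[X]) {m : ℤ} (hp : p.natDegree < m.natAbs) (z : ℂ) :
    zernikeIntegral p m z = 0 := by
  simp_rw [zernikeIntegral, eval_eq_sum_range, Finset.mul_sum]
  rw [intervalIntegral.integral_finsetSum
    fun i _ => Continuous.intervalIntegrable (by fun_prop) _ _]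
  refine Finset.sum_eq_zero fun i hi => ?_
  simp_rw [mul_left_comm (cexp _)]
  rw [intervalIntegral.integral_const_mul,
    integral_exp_mul_zernikeArg_pow z i m (by have := Finset.mem_range.mp hi; omega), mul_zero]

theorem hasFDerivAt_zernikeIntegral (p : ℂ[X]) (m : ℤ) (z : ℂ) :
    HasFDerivAt (zernikeIntegral p m)
      (∫ θ in (0 : ℝ)..(2 * π),
        (exp (I * m * θ) * p.derivative.eval (zernikeArg θ z)) • zernikeArg θ) z :=
  hasFDerivAt_intervalIntegral_mul_comp p.hasDerivAt p.derivative.continuous (by fun_prop)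
    continuous_zernikeArg _ _ z

theorem differentiable_zernikeIntegral (p : ℂ[X]) (m : ℤ) :
    Differentiable ℝ (zernikeIntegral p m) :=
  fun z => (hasFDerivAt_zernikeIntegral p m z).differentiableAt

theorem fderiv_zernikeIntegral_apply (p : ℂ[X]) (m : ℤ) (z v : ℂ) :
    fderiv ℝ (zernikeIntegral p m) z v = ∫ θ in (0 : ℝ)..(2 * π),
      exp (I * m * θ) * p.derivative.eval (zernikeArg θ z) * zernikeArg θ v := by
  rw [(hasFDerivAt_zernikeIntegral p m z).fderiv,
    ContinuousLinearMap.intervalIntegral_apply (Continuous.intervalIntegrable (by fun_prop) _ _)]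
  rfl

theorem wirtingerZbar_zernikeIntegral (p : ℂ[X]) (m : ℤ) (z : ℂ) :
    wirtingerZbar (zernikeIntegral p m) z = -(I / 2) * zernikeIntegral p.derivative (m + 1) z := by
  rw [wirtingerZbar, fderiv_zernikeIntegral_apply, fderiv_zernikeIntegral_apply,
    ← intervalIntegral.integral_const_mul,
    ← intervalIntegral.integral_add (Continuous.intervalIntegrable (by fun_prop) _ _)
      (Continuous.intervalIntegrable (by fun_prop) _ _),
    zernikeIntegral, ← intervalIntegral.integral_const_mul, ← intervalIntegral.integral_const_mul]
  congr 1 with θ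
  rw [exp_int_add_one_mul_I]
  linear_combination (1 / 2 * exp (I * m * θ) * p.derivative.eval (zernikeArg θ z)) *
    zernikeArg_one_add_I_mul θ

theorem wirtingerZ_zernikeIntegral (p : ℂ[X]) (m : ℤ) (z : ℂ) :
    wirtingerZ (zernikeIntegral p m) z = I / 2 * zernikeIntegral p.derivative (m - 1) z := by
  rw [wirtingerZ, fderiv_zernikeIntegral_apply, fderiv_zernikeIntegral_apply,
    ← intervalIntegral.integral_const_mul,
    ← intervalIntegral.integral_sub (Continuous.intervalIntegrable (by fun_prop) _ _)
      (Continuous.intervalIntegrable (by fun_prop) _ _),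
    zernikeIntegral, ← intervalIntegral.integral_const_mul, ← intervalIntegral.integral_const_mul]
  congr 1 with θ
  rw [exp_int_sub_one_mul_I]
  linear_combination (1 / 2 * exp (I * m * θ) * p.derivative.eval (zernikeArg θ z)) *
    zernikeArg_one_sub_I_mul θ

theorem Znk_eq_zernikeIntegral (n : ℕ) (k : ℤ) :
    Znk n k = fun z =>
      (-1 : ℂ) ^ n / (2 * π) * zernikeIntegral (C (I ^ n) * U ℂ n) (n - 2 * k) z := by
  funext z
  simp only [Znk, zernikeIntegral, ← zernikeArg_apply, eval_C_mul, W_eq_eval_U]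
  push_cast
  rfl

/-- The Zernike functions `Z_{n,k}` are real-differentiable, and satisfy the Cauchy–Riemann
system `∂_z̄ Z_{n,0} = 0`, `∂_z Z_{n,k} + ∂_z̄ Z_{n,k+1} = 0` for `0 ≤ k ≤ n-1`, and
`∂_z Z_{n,n} = 0`. -/
theorem Znk_CauchyRiemann (n : ℕ) :
    (∀ k : ℤ, Differentiable ℝ (Znk n k)) ∧
    (∀ z : ℂ, wirtingerZbar (Znk n 0) z = 0) ∧
    (∀ k : ℤ, 0 ≤ k → k ≤ (n : ℤ) - 1 →
      ∀ z : ℂ, wirtingerZ (Znk n k) z + wirtingerZbar (Znk n (k + 1)) z = 0) ∧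
    (∀ z : ℂ, wirtingerZ (Znk n n) z = 0) := by
  set p : ℂ[X] := C (I ^ n) * U ℂ n
  have hp : p.derivative.natDegree ≤ n := by
    have hU : p.natDegree ≤ n := (natDegree_C_mul_le _ _).trans (natDegree_U_natCast ℂ n).le
    exact (natDegree_derivative_le p).trans (by omega)
  have hdiff := differentiable_zernikeIntegral p
  refine ⟨fun k => ?_, fun z => ?_, fun k _ _ z => ?_, fun z => ?_⟩
  · rw [Znk_eq_zernikeIntegral]
    exact (hdiff _).const_mul _
  · rw [Znk_eq_zernikeIntegral, wirtingerZbar_const_mul _ (hdiff _ z),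
      wirtingerZbar_zernikeIntegral, zernikeIntegral_eq_zero _ (by omega), mul_zero, mul_zero]
  · rw [Znk_eq_zernikeIntegral, Znk_eq_zernikeIntegral, wirtingerZ_const_mul _ (hdiff _ z),
      wirtingerZbar_const_mul _ (hdiff _ z), wirtingerZ_zernikeIntegral,
      wirtingerZbar_zernikeIntegral, show (n : ℤ) - 2 * (k + 1) + 1 = n - 2 * k - 1 by ring]
    ring
  · rw [Znk_eq_zernikeIntegral, wirtingerZ_const_mul _ (hdiff _ z), wirtingerZ_zernikeIntegral,
      zernikeIntegral_eq_zero _ (by omega), mul_zero, mul_zero]
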